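/- arXiv:1108.0065 — 5 statements merged into one kernel-verified Lean document; each statement's English description precedes it below -/
import Mathlib

section
/- Let p be an n×n real matrix with nonnegative entries. Suppose β lies in the interior of the β-polytope 𝓑_p of p and solves the BP equations for p. Then perm(p) = Z_BP(β|p) · perm(M) / ∏_{(i,j): p_ij>0} (1−β_ij), where M is the n×n matrix with entries M_ij = β_ij·(1−β_ij). -/
open scoped BigOperators

/-- The permanent of an `n × n` real matrix. -/
noncomputable def permanent {n : ℕ} (p : Matrix (Fin n) (Fin n) ℝ) : ℝ :=
  ∑ σ : Equiv.Perm (Fin n), ∏ i, p i (σ i)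

/-- A matrix is doubly stochastic: nonnegative entries, all row and column sums equal 1. -/
def DoublyStochastic {n : ℕ} (β : Matrix (Fin n) (Fin n) ℝ) : Prop :=
  (∀ i j, 0 ≤ β i j) ∧ (∀ i, ∑ j, β i j = 1) ∧ (∀ j, ∑ i, β i j = 1)

/-- Membership in the β-polytope `𝓑_p` of `p`. -/
def InPolytope {n : ℕ} (p β : Matrix (Fin n) (Fin n) ℝ) : Prop :=
  DoublyStochastic β ∧ ∀ i j, p i j = 0 → β i j = 0

/-- Membership in the interior of the β-polytope of `p`. -/
def InInterior {n : ℕ} (p β : Matrix (Fin n) (Fin n) ℝ) : Prop :=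
  InPolytope p β ∧ ∀ i j, 0 < p i j → 0 < β i j ∧ β i j < 1

/-- Bethe free energy `F_BP(β|p)` (sum over entries with `p i j > 0`;
the convention `0 * log 0 = 0` holds since `Real.log 0 = 0`). -/
noncomputable def FBP {n : ℕ} (p β : Matrix (Fin n) (Fin n) ℝ) : ℝ :=
  ∑ i, ∑ j, if 0 < p i j then
    β i j * Real.log (β i j / p i j) - (1 - β i j) * Real.log (1 - β i j)
  else 0

/-- Mean-field free energy `F_MF(β|p)`. -/
noncomputable def FMF {n : ℕ} (p β : Matrix (Fin n) (Fin n) ℝ) : ℝ :=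
  ∑ i, ∑ j, if 0 < p i j then
    β i j * Real.log (β i j / p i j) + (1 - β i j) * Real.log (1 - β i j)
  else 0

/-- Fractional free energy `F_f^γ(β|p)`. -/
noncomputable def Ff {n : ℕ} (γ : ℝ) (p β : Matrix (Fin n) (Fin n) ℝ) : ℝ :=
  ∑ i, ∑ j, if 0 < p i j then
    β i j * Real.log (β i j / p i j) + γ * ((1 - β i j) * Real.log (1 - β i j))
  else 0

/-- Optimal fractional partition function `Z_of^γ(p) = exp(-min_{β ∈ 𝓑_p} F_f^γ(β|p))`
(the minimum is expressed as an infimum; it is attained since `𝓑_p` is nonempty and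
compact when `permanent p > 0` and `F_f^γ(·|p)` is continuous on it). -/
noncomputable def Zof {n : ℕ} (γ : ℝ) (p : Matrix (Fin n) (Fin n) ℝ) : ℝ :=
  Real.exp (-(sInf ((fun β => Ff γ p β) '' {β | InPolytope p β})))

/-!
The BP equations say `p = M ⊙ (u vᵀ)` with `M = β ⊙ (1 - β)`, so `perm p = (∏ u)(∏ v) perm M`.
On the other hand, substituting `p` into `F_BP` and using that `β` is doubly stochastic,
`-F_BP(β|p) = ∑ log uᵢ + ∑ log vⱼ + ∑_{p_ij > 0} log (1 - β_ij)`, so `Z_BP` equals the same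
scaling factor `(∏ u)(∏ v)` times `∏_{p_ij > 0} (1 - β_ij)`.
-/

open Real Finset

theorem permanent_mul_outer {n : ℕ} (M : Matrix (Fin n) (Fin n) ℝ) (u v : Fin n → ℝ) :
    permanent (fun i j => M i j * (u i * v j)) = permanent M * ((∏ i, u i) * ∏ j, v j) := by
  unfold permanent
  rw [sum_mul]
  refine sum_congr rfl fun σ _ => ?_
  rw [prod_mul_distrib, prod_mul_distrib, Equiv.prod_comp σ v]

theorem DoublyStochastic.sum_sum_mul_add {n : ℕ} {β : Matrix (Fin n) (Fin n) ℝ}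
    (hβ : DoublyStochastic β) (a b : Fin n → ℝ) :
    ∑ i, ∑ j, β i j * (a i + b j) = ∑ i, a i + ∑ j, b j := by
  obtain ⟨-, hrow, hcol⟩ := hβ
  simp only [mul_add, sum_add_distrib]
  congr 1
  · exact sum_congr rfl fun i _ => by rw [← sum_mul, hrow i, one_mul]
  · rw [sum_comm]
    exact sum_congr rfl fun j _ => by rw [← sum_mul, hcol j, one_mul]

/-- `log (b / p) = -log x - log (1 - b)`, and the two `log (1 - b)` terms then add up. -/
theorem bethe_term_eq_of_eq_mul {b p x : ℝ} (hb₀ : 0 < b) (hb₁ : b < 1) (hx : 0 < x)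
    (hp : p = b * (1 - b) * x) :
    b * log (b / p) - (1 - b) * log (1 - b) = -(b * log x + log (1 - b)) := by
  have hb₁' : 0 < 1 - b := by linarith
  rw [hp, log_div hb₀.ne' (by positivity), log_mul (by positivity) hx.ne',
    log_mul hb₀.ne' hb₁'.ne']
  ring

theorem FBP_eq_of_eq_mul {n : ℕ} {p β : Matrix (Fin n) (Fin n) ℝ} {u v : Fin n → ℝ}
    (hp : ∀ i j, 0 ≤ p i j) (hβ : InInterior p β) (hu : ∀ i, 0 < u i) (hv : ∀ j, 0 < v j)
    (hpβ : ∀ i j, p i j = β i j * (1 - β i j) * (u i * v j)) :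
    FBP p β = -(∑ i, log (u i) + ∑ j, log (v j) +
      ∑ i, ∑ j, if 0 < p i j then log (1 - β i j) else 0) := by
  obtain ⟨⟨hds, hsupp⟩, hint⟩ := hβ
  have hterm : ∀ i j, (if 0 < p i j then
      β i j * log (β i j / p i j) - (1 - β i j) * log (1 - β i j) else 0) =
      -(β i j * (log (u i) + log (v j)) + if 0 < p i j then log (1 - β i j) else 0) := by
    intro i j
    split_ifs with hpos
    · rw [← log_mul (hu i).ne' (hv j).ne']
      exact bethe_term_eq_of_eq_mul (hint i j hpos).1 (hint i j hpos).2
        (mul_pos (hu i) (hv j)) (hpβ i j)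
    · simp [hsupp i j (le_antisymm (not_lt.mp hpos) (hp i j))]
  simp only [FBP, hterm, sum_neg_distrib, sum_add_distrib, hds.sum_sum_mul_add]

theorem exp_neg_FBP_of_eq_mul {n : ℕ} {p β : Matrix (Fin n) (Fin n) ℝ} {u v : Fin n → ℝ}
    (hp : ∀ i j, 0 ≤ p i j) (hβ : InInterior p β) (hu : ∀ i, 0 < u i) (hv : ∀ j, 0 < v j)
    (hpβ : ∀ i j, p i j = β i j * (1 - β i j) * (u i * v j)) :
    exp (-FBP p β) = (∏ i, u i) * (∏ j, v j) *
      ∏ i, ∏ j, (if 0 < p i j then 1 - β i j else 1) := by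
  have hpos : ∀ i j, 0 < p i j → 0 < 1 - β i j := fun i j h => sub_pos.mpr (hβ.2 i j h).2
  rw [FBP_eq_of_eq_mul hp hβ hu hv hpβ, neg_neg, exp_add, exp_add]
  simp only [exp_sum, apply_ite exp, exp_zero]
  congr 1
  · rw [prod_congr rfl fun i _ => exp_log (hu i), prod_congr rfl fun j _ => exp_log (hv j)]
  · exact prod_congr rfl fun i _ => prod_congr rfl fun j _ => by
      split_ifs with h
      exacts [exp_log (hpos i j h), rfl]

theorem permanent_BP_exact {n : ℕ} (p β : Matrix (Fin n) (Fin n) ℝ)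
    (hp : ∀ i j, 0 ≤ p i j) (hβ : InInterior p β)
    (hBP : ∃ u v : Fin n → ℝ, (∀ i, 0 < u i) ∧ (∀ j, 0 < v j) ∧
      ∀ i j, β i j * (1 - β i j) = p i j / (u i * v j)) :
    permanent p = Real.exp (-(FBP p β)) *
      permanent (fun i j => β i j * (1 - β i j)) /
      ∏ i, ∏ j, (if 0 < p i j then 1 - β i j else 1) := by
  obtain ⟨u, v, hu, hv, hbp⟩ := hBP
  have hpβ : ∀ i j, p i j = β i j * (1 - β i j) * (u i * v j) := fun i j =>
    ((eq_div_iff (mul_pos (hu i) (hv j)).ne').mp (hbp i j)).symm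
  have hD : 0 < ∏ i, ∏ j, (if 0 < p i j then 1 - β i j else 1) :=
    prod_pos fun i _ => prod_pos fun j _ => by
      split_ifs with h
      exacts [sub_pos.mpr (hβ.2 i j h).2, one_pos]
  have hperm : permanent p = permanent (fun i j => β i j * (1 - β i j)) *
      ((∏ i, u i) * ∏ j, v j) :=
    (congrArg permanent (funext₂ hpβ)).trans (permanent_mul_outer _ u v)
  rw [exp_neg_FBP_of_eq_mul hp hβ hu hv hpβ, hperm, eq_div_iff hD.ne']
  ring
end

section
/- Let p be an n×n real matrix with nonnegative entries. The Bethe free energy F_BP(·|p) is convex on the β-polytope 𝓑_p of p: for all β₁, β₂ ∈ 𝓑_p and all t ∈ [0,1], the matrix t·β₁ + (1−t)·β₂ lies in 𝓑_p and F_BP(t·β₁ + (1−t)·β₂ | p) ≤ t·F_BP(β₁|p) + (1−t)·F_BP(β₂|p). -/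
/-!
Since `β log (β / p) = β log β - β log p`, on the polytope `F_BP(β|p)` is a linear function of `β`
minus the sum over the rows of `β` of the Bethe entropy
`H(x) = ∑ⱼ (-xⱼ log xⱼ + (1 - xⱼ) log (1 - xⱼ))`, so it suffices that `H` is concave on the
probability simplex. Along a segment `z + t u` with `∑ⱼ uⱼ = 0` the second derivative of `H` is
`∑ⱼ uⱼ² (1 / (1 - zⱼ) - 1 / zⱼ)`. Its terms with `zⱼ ≤ 1/2` are nonpositive, and at most one
coordinate `zₘ` exceeds `1/2`; for it, Cauchy–Schwarz
`uₘ² = (∑_{j ≠ m} uⱼ)² ≤ (1 - zₘ) ∑_{j ≠ m} uⱼ² / zⱼ` lets the other terms absorb its contribution.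
-/

open scoped BigOperators

open Finset Real

theorem Finset.sq_sum_le_sum_mul_sum_sq_div {ι : Type*} (s : Finset ι) {z u : ι → ℝ}
    (hz : ∀ j ∈ s, 0 ≤ z j) (hu : ∀ j ∈ s, u j ≠ 0 → 0 < z j) :
    (∑ j ∈ s, u j) ^ 2 ≤ (∑ j ∈ s, z j) * ∑ j ∈ s, u j ^ 2 / z j := by
  refine sum_sq_le_sum_mul_sum_of_sq_le_mul s hz (fun j hj => div_nonneg (sq_nonneg _) (hz j hj))
    fun j hj => ?_
  rcases eq_or_ne (u j) 0 with h | h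
  · simp [h]
  · rw [mul_div_cancel₀ _ (hu j hj h).ne']

theorem concaveOn_of_concaveOn_segment {E : Type*} [AddCommGroup E] [Module ℝ E] {s : Set E}
    {f : E → ℝ} (hs : Convex ℝ s)
    (h : ∀ x ∈ s, ∀ y ∈ s, ConcaveOn ℝ (Set.Icc 0 1) fun t : ℝ => f (y + t • (x - y))) :
    ConcaveOn ℝ s f := by
  refine ⟨hs, fun x hx y hy a b ha hb hab => ?_⟩
  have := (h x hx y hy).2 (Set.right_mem_Icc.2 zero_le_one) (Set.left_mem_Icc.2 zero_le_one)
    ha hb hab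
  obtain rfl : b = 1 - a := eq_sub_of_add_eq' hab
  simp only [smul_eq_mul, mul_one, mul_zero, add_zero, one_smul, zero_smul,
    add_sub_cancel] at this
  rwa [show a • x + (1 - a) • y = y + a • (x - y) by module]

theorem concaveOn_sum {ι E : Type*} [AddCommGroup E] [Module ℝ E] {s : Set E} (t : Finset ι)
    {f : ι → E → ℝ} (hs : Convex ℝ s) (hf : ∀ i ∈ t, ConcaveOn ℝ s (f i)) :
    ConcaveOn ℝ s fun x => ∑ i ∈ t, f i x := by
  refine ⟨hs, fun x hx y hy a b ha hb hab => ?_⟩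
  simp only [smul_eq_mul, mul_sum, ← sum_add_distrib]
  exact sum_le_sum fun i hi => (hf i hi).2 hx hy ha hb hab

theorem add_mul_sub_mem_Ioo {a b t : ℝ} (ha : a ∈ Set.Icc (0 : ℝ) 1) (hb : b ∈ Set.Icc (0 : ℝ) 1)
    (hab : a ≠ b) (ht : t ∈ Set.Ioo (0 : ℝ) 1) : b + t * (a - b) ∈ Set.Ioo (0 : ℝ) 1 := by
  obtain ⟨ha0, ha1⟩ := ha
  obtain ⟨hb0, hb1⟩ := hb
  obtain ⟨ht0, ht1⟩ := ht
  rcases hab.lt_or_gt with h | h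
  · constructor <;> nlinarith
  · constructor <;> nlinarith

theorem hasDerivAt_comp_add_mul {f : ℝ → ℝ} {f' a u t : ℝ}
    (hf : u ≠ 0 → HasDerivAt f f' (a + t * u)) :
    HasDerivAt (fun s => f (a + s * u)) (u * f') t := by
  rcases eq_or_ne u 0 with rfl | hu
  · simpa using hasDerivAt_const t (f a)
  rw [mul_comm]
  exact (hf hu).comp t (by simpa using ((hasDerivAt_id t).mul_const u).const_add a)

section Simplex

variable {ι : Type*} [Fintype ι] {z u : ι → ℝ}

theorem sum_sq_div_one_sub_le_sum_sq_div_of_half_lt (hz : z ∈ stdSimplex ℝ ι)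
    (hu : ∑ j, u j = 0) (hsupp : ∀ j, u j ≠ 0 → 0 < z j ∧ z j < 1) {m : ι} (hm : 1 / 2 < z m) :
    ∑ j, u j ^ 2 / (1 - z j) ≤ ∑ j, u j ^ 2 / z j := by
  classical
  set s := univ.erase m
  set A := ∑ j ∈ s, u j ^ 2 / z j
  set B := ∑ j ∈ s, u j ^ 2 / (1 - z j)
  have hzs : ∑ j ∈ s, z j = 1 - z m := by
    rw [← hz.2, ← add_sum_erase _ _ (mem_univ m)]; ring
  have hus : ∑ j ∈ s, u j = -u m := by
    rw [eq_neg_iff_add_eq_zero, ← hu, ← add_sum_erase _ _ (mem_univ m), add_comm]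
  have hA : 0 ≤ A := sum_nonneg fun j _ => div_nonneg (sq_nonneg _) (hz.1 j)
  have hCS : u m ^ 2 ≤ (1 - z m) * A := by
    have := s.sq_sum_le_sum_mul_sum_sq_div (fun j _ => hz.1 j) fun j _ h => (hsupp j h).1
    rwa [hus, hzs, neg_sq] at this
  have hBA : z m * B ≤ (1 - z m) * A := by
    rw [mul_sum, mul_sum]
    refine sum_le_sum fun j hj => ?_
    rcases eq_or_ne (u j) 0 with h | h
    · simp [h]
    have hj0 := (hsupp j h).1
    have hjm : z j ≤ 1 - z m := hzs ▸ single_le_sum (fun k _ => hz.1 k) hj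
    rw [mul_div_left_comm, mul_div_left_comm (1 - z m)]
    refine mul_le_mul_of_nonneg_left ?_ (sq_nonneg _)
    rw [div_le_div_iff₀ (by linarith) hj0]
    nlinarith
  rw [← add_sum_erase _ _ (mem_univ m), ← add_sum_erase _ _ (mem_univ m)]
  rcases eq_or_ne (u m) 0 with h | h
  · simp only [h, zero_pow two_ne_zero, zero_div, zero_add]
    nlinarith
  obtain ⟨hm0, hm1⟩ := hsupp m h
  -- cleared of denominators the claim is `(2zₘ - 1) uₘ² + zₘ (1 - zₘ) B ≤ zₘ (1 - zₘ) A`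
  rw [div_add' _ _ _ (by linarith), div_add' _ _ _ hm0.ne', div_le_div_iff₀ (by linarith) hm0]
  nlinarith [mul_le_mul_of_nonneg_right hCS (by linarith : 0 ≤ 2 * z m - 1),
    mul_le_mul_of_nonneg_right hBA (by linarith : 0 ≤ 1 - z m)]

theorem sum_sq_div_one_sub_le_sum_sq_div (hz : z ∈ stdSimplex ℝ ι) (hu : ∑ j, u j = 0)
    (hsupp : ∀ j, u j ≠ 0 → 0 < z j ∧ z j < 1) :
    ∑ j, u j ^ 2 / (1 - z j) ≤ ∑ j, u j ^ 2 / z j := by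
  by_cases hm : ∃ m, 1 / 2 < z m
  · obtain ⟨m, hm⟩ := hm
    exact sum_sq_div_one_sub_le_sum_sq_div_of_half_lt hz hu hsupp hm
  push Not at hm
  refine sum_le_sum fun j _ => ?_
  rcases eq_or_ne (u j) 0 with h | h
  · simp [h]
  exact div_le_div_of_nonneg_left (sq_nonneg _) (hsupp j h).1 (by linarith [hm j])

end Simplex

theorem hasDerivAt_negMulLog_sub_negMulLog_one_sub {z : ℝ} (h0 : z ≠ 0) (h1 : z ≠ 1) :
    HasDerivAt (fun z => negMulLog z - negMulLog (1 - z)) (-log z - log (1 - z) - 2) z := by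
  have h1' : 1 - z ≠ 0 := sub_ne_zero.2 h1.symm
  exact ((hasDerivAt_negMulLog h0).sub
    ((hasDerivAt_negMulLog h1').comp z ((hasDerivAt_id z).const_sub 1))).congr_deriv (by ring)

theorem hasDerivAt_neg_log_sub_log_one_sub_sub_two {z : ℝ} (h0 : z ≠ 0) (h1 : z ≠ 1) :
    HasDerivAt (fun z => -log z - log (1 - z) - 2) ((1 - z)⁻¹ - z⁻¹) z := by
  have h1' : 1 - z ≠ 0 := sub_ne_zero.2 h1.symm
  exact (((hasDerivAt_log h0).neg.sub
    ((hasDerivAt_log h1').comp z ((hasDerivAt_id z).const_sub 1))).sub_const 2).congr_deriv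
    (by ring)

noncomputable def betheEntropy {ι : Type*} [Fintype ι] (x : ι → ℝ) : ℝ :=
  ∑ j, (negMulLog (x j) - negMulLog (1 - x j))

theorem concaveOn_betheEntropy {ι : Type*} [Fintype ι] :
    ConcaveOn ℝ (stdSimplex ℝ ι) betheEntropy := by
  refine concaveOn_of_concaveOn_segment (convex_stdSimplex ℝ ι) fun x hx y hy => ?_
  set u := x - y
  have hu : ∑ j, u j = 0 := by simp [u, sum_sub_distrib, hx.2, hy.2]
  have hsupp : ∀ t ∈ Set.Ioo (0 : ℝ) 1, ∀ j, u j ≠ 0 → y j + t * u j ∈ Set.Ioo (0 : ℝ) 1 :=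
    fun t ht j hj => add_mul_sub_mem_Ioo (mem_Icc_of_mem_stdSimplex hx j)
      (mem_Icc_of_mem_stdSimplex hy j) (sub_ne_zero.1 hj) ht
  have hmem : ∀ t ∈ Set.Icc (0 : ℝ) 1, y + t • u ∈ stdSimplex ℝ ι := fun t ht => by
    convert (convex_stdSimplex ℝ ι) hy hx (sub_nonneg.2 ht.2) ht.1 (sub_add_cancel 1 t) using 1
    simp only [u]
    module
  simp only [betheEntropy, Pi.add_apply, Pi.smul_apply, smul_eq_mul]
  refine concaveOn_of_hasDerivWithinAt2_nonpos (convex_Icc 0 1) (by fun_prop)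
    (f' := fun t => ∑ j, u j * (-log (y j + t * u j) - log (1 - (y j + t * u j)) - 2))
    (f'' := fun t => ∑ j, u j * (u j * ((1 - (y j + t * u j))⁻¹ - (y j + t * u j)⁻¹)))
    ?_ ?_ ?_ <;> rw [interior_Icc] <;> intro t ht
  · refine (HasDerivAt.fun_sum fun j _ => ?_).hasDerivWithinAt
    exact hasDerivAt_comp_add_mul fun hj =>
      hasDerivAt_negMulLog_sub_negMulLog_one_sub (hsupp t ht j hj).1.ne' (hsupp t ht j hj).2.ne
  · refine (HasDerivAt.fun_sum fun j _ => ?_).hasDerivWithinAt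
    exact (hasDerivAt_comp_add_mul fun hj => hasDerivAt_neg_log_sub_log_one_sub_sub_two
      (hsupp t ht j hj).1.ne' (hsupp t ht j hj).2.ne).const_mul (u j)
  · have := sum_sq_div_one_sub_le_sum_sq_div (hmem t (Set.Ioo_subset_Icc_self ht)) hu
      fun j hj => hsupp t ht j hj
    simp only [Pi.add_apply, Pi.smul_apply, smul_eq_mul] at this
    calc _ = ∑ j, u j ^ 2 / (1 - (y j + t * u j)) - ∑ j, u j ^ 2 / (y j + t * u j) := by
          rw [← sum_sub_distrib]
          exact sum_congr rfl fun j _ => by ring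
      _ ≤ 0 := sub_nonpos.2 this

theorem concaveOn_betheEntropy_add_sum_mul {ι : Type*} [Fintype ι] (c : ι → ℝ) :
    ConcaveOn ℝ (stdSimplex ℝ ι) fun x => betheEntropy x + ∑ j, x j * c j := by
  refine (concaveOn_betheEntropy.add
    ((Fintype.linearCombination ℝ c).concaveOn (convex_stdSimplex ℝ ι))).congr fun x _ => ?_
  simp [Fintype.linearCombination_apply]

theorem FBP_eq_neg_sum_betheEntropy {n : ℕ} {p β : Matrix (Fin n) (Fin n) ℝ}
    (hβ : ∀ i j, ¬0 < p i j → β i j = 0) :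
    FBP p β = -∑ i, (betheEntropy (β i) + ∑ j, β i j * log (p i j)) := by
  simp only [FBP, betheEntropy, ← sum_add_distrib, ← sum_neg_distrib]
  refine sum_congr rfl fun i _ => sum_congr rfl fun j _ => ?_
  split_ifs with hp
  · rcases eq_or_ne (β i j) 0 with h | h
    · simp [h]
    · rw [log_div h hp.ne', negMulLog, negMulLog]
      ring
  · simp [hβ i j hp]

theorem convex_setOf_inPolytope {n : ℕ} (p : Matrix (Fin n) (Fin n) ℝ) :
    Convex ℝ {β | InPolytope p β} := by
  intro β₁ h₁ β₂ h₂ a b ha hb hab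
  refine ⟨mem_doublyStochastic_iff_sum.1 (convex_doublyStochastic
    (mem_doublyStochastic_iff_sum.2 h₁.1) (mem_doublyStochastic_iff_sum.2 h₂.1) ha hb hab),
    fun i j hp => ?_⟩
  simp [h₁.2 i j hp, h₂.2 i j hp]

theorem convexOn_FBP {n : ℕ} {p : Matrix (Fin n) (Fin n) ℝ} (hp : ∀ i j, 0 ≤ p i j) :
    ConvexOn ℝ {β | InPolytope p β} (FBP p) := by
  have hrow (i : Fin n) : ConcaveOn ℝ {β | InPolytope p β}
      fun β => betheEntropy (β i) + ∑ j, β i j * log (p i j) :=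
    ((concaveOn_betheEntropy_add_sum_mul (fun j => log (p i j))).comp_linearMap
      (LinearMap.proj i : Matrix (Fin n) (Fin n) ℝ →ₗ[ℝ] Fin n → ℝ)).subset
      (fun β hβ => ⟨fun j => hβ.1.1 i j, hβ.1.2.1 i⟩) (convex_setOf_inPolytope p)
  refine (neg_convexOn_iff.2 (concaveOn_sum univ (convex_setOf_inPolytope p)
    fun i _ => hrow i)).congr fun β hβ => (FBP_eq_neg_sum_betheEntropy fun i j hpij => ?_).symm
  exact hβ.2 i j ((hp i j).eq_or_lt.resolve_right hpij).symm

theorem FBP_convexOn {n : ℕ} (p : Matrix (Fin n) (Fin n) ℝ)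
    (hp : ∀ i j, 0 ≤ p i j) :
    ∀ β₁ β₂ : Matrix (Fin n) (Fin n) ℝ, InPolytope p β₁ → InPolytope p β₂ →
      ∀ t : ℝ, 0 ≤ t → t ≤ 1 →
        InPolytope p (t • β₁ + (1 - t) • β₂) ∧
        FBP p (t • β₁ + (1 - t) • β₂) ≤ t * FBP p β₁ + (1 - t) * FBP p β₂ := by
  intro β₁ β₂ h₁ h₂ t ht₀ ht₁
  have hFBP := convexOn_FBP hp
  exact ⟨hFBP.1 h₁ h₂ ht₀ (sub_nonneg.2 ht₁) (add_sub_cancel t 1),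
    hFBP.2 h₁ h₂ ht₀ (sub_nonneg.2 ht₁) (add_sub_cancel t 1)⟩
end

section
/- Let p be an n×n real matrix with nonnegative entries and let γ ∈ [−1,1]. Suppose β lies in the interior of the β-polytope 𝓑_p of p and solves the γ-fractional equations for p. Then perm(p) = Z_f^γ(β|p) · perm(N) · ∏_{(i,j): p_ij>0} (1−β_ij)^γ, where N is the n×n matrix with entries N_ij = β_ij/(1−β_ij)^γ for p_ij > 0 and N_ij = 0 for p_ij = 0. -/
open scoped BigOperators

/-!
Dividing the fractional equations by their right-hand side shows that `p` is the matrix `N`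
scaled by the row weights `w` and the column weights `w'`, so that
`perm p = (∏ w) (∏ w') perm N`. Taking logarithms of the same equations, each entry of
`exp (-F_f^γ)` times `(1 - β_ij)^γ` collapses to `(w_i w'_j)^β_ij`, and since `β` has unit row
and column sums these powers multiply to `(∏ w) (∏ w')` as well.
-/

open Finset

theorem permanent_mul_mul {n : ℕ} (u v : Fin n → ℝ) (M : Matrix (Fin n) (Fin n) ℝ) :
    permanent (fun i j => u i * v j * M i j) = (∏ i, u i) * (∏ j, v j) * permanent M := by
  unfold permanent
  rw [mul_sum]
  refine sum_congr rfl fun σ _ => ?_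
  rw [prod_mul_distrib, prod_mul_distrib, Equiv.prod_comp σ v]

theorem prod_prod_mul_rpow_of_sum_eq_one {ι κ : Type*} [Fintype ι] [Fintype κ]
    {u : ι → ℝ} {v : κ → ℝ} (hu : ∀ i, 0 < u i) (hv : ∀ j, 0 < v j) {β : ι → κ → ℝ}
    (hrow : ∀ i, ∑ j, β i j = 1) (hcol : ∀ j, ∑ i, β i j = 1) :
    ∏ i, ∏ j, (u i * v j) ^ β i j = (∏ i, u i) * ∏ j, v j := by
  simp only [fun i j => Real.mul_rpow (hu i).le (hv j).le, prod_mul_distrib]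
  rw [prod_comm (f := fun i j => v j ^ β i j)]
  simp only [← Real.rpow_sum_of_pos (hu _), ← Real.rpow_sum_of_pos (hv _), hrow, hcol,
    Real.rpow_one]

theorem exp_neg_fractional_term_mul_rpow {γ b q x : ℝ} (hb₀ : 0 < b) (hb₁ : b < 1)
    (hq : 0 < q) (hx : 0 < x) (h : b / (1 - b) ^ γ = q / x) :
    Real.exp (-(b * Real.log (b / q) + γ * ((1 - b) * Real.log (1 - b)))) * (1 - b) ^ γ
      = x ^ b := by
  have h1b : 0 < 1 - b := sub_pos.mpr hb₁
  have hlog : Real.log b - γ * Real.log (1 - b) = Real.log q - Real.log x := by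
    have := congrArg Real.log h
    rwa [Real.log_div hb₀.ne' (Real.rpow_pos_of_pos h1b γ).ne', Real.log_rpow h1b,
      Real.log_div hq.ne' hx.ne'] at this
  rw [Real.rpow_def_of_pos h1b, Real.rpow_def_of_pos hx, ← Real.exp_add,
    Real.log_div hb₀.ne' hq.ne']
  congr 1
  linear_combination -b * hlog

section FractionalSolution

variable {n : ℕ} {γ : ℝ} {p β : Matrix (Fin n) (Fin n) ℝ} {w w' : Fin n → ℝ}

theorem entry_eq_mul_mul_of_fractional (hp : ∀ i j, 0 ≤ p i j) (hw : ∀ i, 0 < w i)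
    (hw' : ∀ j, 0 < w' j) (hfrac : ∀ i j, β i j / (1 - β i j) ^ γ = p i j / (w i * w' j))
    (i j : Fin n) :
    p i j = w i * w' j * (if 0 < p i j then β i j / (1 - β i j) ^ γ else 0) := by
  split_ifs with h
  · rw [hfrac, mul_div_cancel₀ _ (mul_pos (hw i) (hw' j)).ne']
  · simp [le_antisymm (not_lt.mp h) (hp i j)]

theorem exp_neg_Ff_mul_prod_eq (hp : ∀ i j, 0 ≤ p i j) (hβ : InInterior p β)
    (hw : ∀ i, 0 < w i) (hw' : ∀ j, 0 < w' j)
    (hfrac : ∀ i j, β i j / (1 - β i j) ^ γ = p i j / (w i * w' j)) :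
    Real.exp (-(Ff γ p β)) * ∏ i, ∏ j, (if 0 < p i j then (1 - β i j) ^ γ else 1)
      = (∏ i, w i) * ∏ j, w' j := by
  obtain ⟨⟨⟨-, hrow, hcol⟩, hzero⟩, hint⟩ := hβ
  have hentry : ∀ i j,
      Real.exp (-(if 0 < p i j then
          β i j * Real.log (β i j / p i j) + γ * ((1 - β i j) * Real.log (1 - β i j))
        else 0)) * (if 0 < p i j then (1 - β i j) ^ γ else 1) = (w i * w' j) ^ β i j := by
    intro i j
    split_ifs with h
    · exact exp_neg_fractional_term_mul_rpow (hint i j h).1 (hint i j h).2 h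
        (mul_pos (hw i) (hw' j)) (hfrac i j)
    · simp [hzero i j (le_antisymm (not_lt.mp h) (hp i j))]
  rw [← prod_prod_mul_rpow_of_sum_eq_one hw hw' hrow hcol]
  simp only [Ff, ← sum_neg_distrib, Real.exp_sum, ← prod_mul_distrib, hentry]

end FractionalSolution

theorem permanent_fractional_exact_general {n : ℕ} (γ : ℝ)
    (p β : Matrix (Fin n) (Fin n) ℝ)
    (hp : ∀ i j, 0 ≤ p i j) (hβ : InInterior p β)
    (hFrac : ∃ w w' : Fin n → ℝ, (∀ i, 0 < w i) ∧ (∀ j, 0 < w' j) ∧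
      ∀ i j, β i j / (1 - β i j) ^ γ = p i j / (w i * w' j)) :
    permanent p = Real.exp (-(Ff γ p β)) *
      permanent (fun i j => if 0 < p i j then β i j / (1 - β i j) ^ γ else 0) *
      ∏ i, ∏ j, (if 0 < p i j then (1 - β i j) ^ γ else 1) := by
  obtain ⟨w, w', hw, hw', hfrac⟩ := hFrac
  have hscale : permanent p = (∏ i, w i) * (∏ j, w' j) *
      permanent (fun i j => if 0 < p i j then β i j / (1 - β i j) ^ γ else 0) :=
    (congrArg permanent (funext₂ (entry_eq_mul_mul_of_fractional hp hw hw' hfrac))).trans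
      (permanent_mul_mul w w' _)
  rw [hscale, ← exp_neg_Ff_mul_prod_eq hp hβ hw hw' hfrac]
  ring

theorem permanent_fractional_exact {n : ℕ} (γ : ℝ)
    (hγ : γ ∈ Set.Icc (-1 : ℝ) 1)
    (p β : Matrix (Fin n) (Fin n) ℝ)
    (hp : ∀ i j, 0 ≤ p i j) (hβ : InInterior p β)
    (hFrac : ∃ w w' : Fin n → ℝ, (∀ i, 0 < w i) ∧ (∀ j, 0 < w' j) ∧
      ∀ i j, β i j / (1 - β i j) ^ γ = p i j / (w i * w' j)) :
    permanent p = Real.exp (-(Ff γ p β)) *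
      permanent (fun i j => if 0 < p i j then β i j / (1 - β i j) ^ γ else 0) *
      ∏ i, ∏ j, (if 0 < p i j then (1 - β i j) ^ γ else 1) :=
  permanent_fractional_exact_general γ p β hp hβ hFrac
end

section
/- Let p be an n×n real matrix with nonnegative entries. Suppose β lies in the interior of the β-polytope 𝓑_p of p and solves the BP equations for p. Then perm(p) ≤ Z_BP(β|p) · ( ∏_{(i,j): p_ij>0} (1−β_ij) )^{−1} · ∏_{j=1}^n ( 1 − Σ_{i=1}^n (β_ij)² ). -/
open scoped BigOperators

/-! The BP equations say that `p` is the diagonal scaling `diag u · (β ∘ (1 - β)) · diag v`.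
Hence `perm p = ∏ uᵢ ∏ vⱼ · perm (β ∘ (1 - β))`, and the permanent of a nonnegative matrix is
at most the product of its column sums, which for `β ∘ (1 - β)` are `1 - ∑ᵢ βᵢⱼ²`. On the other
hand, taking logarithms of the BP equations and summing against the doubly stochastic `β` shows
that `Z_BP(β|p) · ∏ (1 - βᵢⱼ)⁻¹` is exactly `∏ uᵢ ∏ vⱼ`. -/

open Finset

namespace Matrix

variable {ι R : Type*} [Fintype ι] [DecidableEq ι]

theorem permanent_diagonal_mul_mul_diagonal [CommSemiring R] (u v : ι → R) (M : Matrix ι ι R) :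
    (diagonal u * M * diagonal v).permanent = (∏ i, u i) * (∏ j, v j) * M.permanent := by
  simp only [permanent, diagonal_mul, mul_diagonal, mul_sum]
  refine sum_congr rfl fun σ _ => ?_
  rw [prod_mul_distrib, prod_mul_distrib, Equiv.prod_comp σ u]
  ring

theorem permanent_le_prod_sum_col [CommSemiring R] [PartialOrder R] [IsOrderedRing R]
    {M : Matrix ι ι R} (hM : ∀ i j, 0 ≤ M i j) : M.permanent ≤ ∏ j, ∑ i, M i j :=
  calc M.permanent
      = ∑ f ∈ univ.map ⟨_, DFunLike.coe_injective⟩, ∏ j, M (f j) j := by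
        rw [permanent, sum_map]; rfl
    _ ≤ ∑ f : ι → ι, ∏ j, M (f j) j :=
        sum_le_sum_of_subset_of_nonneg (subset_univ _) fun f _ _ => prod_nonneg fun j _ => hM _ _
    _ = ∏ j, ∑ i, M i j := (Fintype.prod_sum fun j i => M i j).symm

end Matrix

theorem permanent_eq_matrix_permanent {n : ℕ} (p : Matrix (Fin n) (Fin n) ℝ) :
    permanent p = p.permanent :=
  Matrix.permanent_transpose p

namespace DoublyStochastic

variable {n : ℕ} {β : Matrix (Fin n) (Fin n) ℝ}

theorem le_one (hβ : DoublyStochastic β) (i j : Fin n) : β i j ≤ 1 :=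
  hβ.2.2 j ▸ single_le_sum (fun k _ => hβ.1 k j) (mem_univ i)

theorem mul_one_sub_nonneg (hβ : DoublyStochastic β) (i j : Fin n) : 0 ≤ β i j * (1 - β i j) :=
  mul_nonneg (hβ.1 i j) (sub_nonneg.2 (hβ.le_one i j))

theorem sum_mul_one_sub (hβ : DoublyStochastic β) (j : Fin n) :
    ∑ i, β i j * (1 - β i j) = 1 - ∑ i, β i j ^ 2 := by
  simp only [mul_one_sub, ← sq, sum_sub_distrib, hβ.2.2 j]

theorem sum_sum_mul_add_s13 (hβ : DoublyStochastic β) (a b : Fin n → ℝ) :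
    ∑ i, ∑ j, β i j * (a i + b j) = ∑ i, a i + ∑ j, b j := by
  simp only [mul_add, sum_add_distrib]
  rw [sum_comm (f := fun i j => β i j * b j)]
  simp only [← sum_mul, hβ.2.1, hβ.2.2, one_mul]

end DoublyStochastic

theorem bethe_entry_of_bp {a b q : ℝ} (ha : 0 < a) (hb₀ : 0 < b) (hb₁ : b < 1)
    (hq : q = a * (b * (1 - b))) :
    -(b * Real.log (b / q) - (1 - b) * Real.log (1 - b)) - Real.log (1 - b) = b * Real.log a := by
  have hb₁' : 0 < 1 - b := sub_pos.2 hb₁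
  rw [hq, Real.log_div hb₀.ne' (by positivity), Real.log_mul ha.ne' (by positivity),
    Real.log_mul hb₀.ne' hb₁'.ne']
  ring

section BP

variable {n : ℕ} {p β : Matrix (Fin n) (Fin n) ℝ} {u v : Fin n → ℝ}

theorem FBP_add_sum_log_one_sub_of_bp (hβ : InInterior p β) (hu : ∀ i, 0 < u i)
    (hv : ∀ j, 0 < v j) (hp : ∀ i j, p i j = u i * (β i j * (1 - β i j)) * v j) :
    FBP p β + ∑ i, ∑ j, (if 0 < p i j then Real.log (1 - β i j) else 0)
      = -(∑ i, Real.log (u i) + ∑ j, Real.log (v j)) := by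
  rw [← hβ.1.1.sum_sum_mul_add_s13, FBP, ← sum_add_distrib, ← sum_neg_distrib]
  refine sum_congr rfl fun i _ => ?_
  rw [← sum_add_distrib, ← sum_neg_distrib]
  refine sum_congr rfl fun j _ => ?_
  split_ifs with hpos
  · obtain ⟨hb₀, hb₁⟩ := hβ.2 i j hpos
    have huv := mul_pos (hu i) (hv j)
    rw [← Real.log_mul (hu i).ne' (hv j).ne',
      ← bethe_entry_of_bp (q := p i j) huv hb₀ hb₁ (by rw [hp]; ring)]
    ring
  · have hp_nonneg : 0 ≤ p i j := by
      rw [hp]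
      exact mul_nonneg (mul_nonneg (hu i).le (hβ.1.1.mul_one_sub_nonneg i j)) (hv j).le
    rw [hβ.1.2 i j (le_antisymm (not_lt.1 hpos) hp_nonneg)]
    simp

theorem exp_neg_FBP_mul_inv_prod_of_bp (hβ : InInterior p β) (hu : ∀ i, 0 < u i)
    (hv : ∀ j, 0 < v j) (hp : ∀ i j, p i j = u i * (β i j * (1 - β i j)) * v j) :
    Real.exp (-FBP p β) * (∏ i, ∏ j, if 0 < p i j then 1 - β i j else 1)⁻¹
      = (∏ i, u i) * ∏ j, v j := by
  have hprod : (∏ i, ∏ j, if 0 < p i j then 1 - β i j else 1)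
      = Real.exp (∑ i, ∑ j, if 0 < p i j then Real.log (1 - β i j) else 0) := by
    simp only [Real.exp_sum]
    refine prod_congr rfl fun i _ => prod_congr rfl fun j _ => ?_
    split_ifs with hpos
    · exact (Real.exp_log (sub_pos.2 (hβ.2 i j hpos).2)).symm
    · exact Real.exp_zero.symm
  rw [hprod, ← Real.exp_neg, ← Real.exp_add, ← neg_add, FBP_add_sum_log_one_sub_of_bp hβ hu hv hp,
    neg_neg, Real.exp_add, Real.exp_sum, Real.exp_sum]
  congr 1
  · exact prod_congr rfl fun i _ => Real.exp_log (hu i)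
  · exact prod_congr rfl fun j _ => Real.exp_log (hv j)

end BP

theorem BP_upper_bound_general {n : ℕ} (p β : Matrix (Fin n) (Fin n) ℝ)
    (hβ : InInterior p β)
    (hBP : ∃ u v : Fin n → ℝ, (∀ i, 0 < u i) ∧ (∀ j, 0 < v j) ∧
      ∀ i j, β i j * (1 - β i j) = p i j / (u i * v j)) :
    permanent p ≤ Real.exp (-(FBP p β)) *
      (∏ i, ∏ j, if 0 < p i j then 1 - β i j else 1)⁻¹ *
      ∏ j, (1 - ∑ i, (β i j) ^ 2) := by
  obtain ⟨u, v, hu, hv, hbp⟩ := hBP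
  have hp : ∀ i j, p i j = u i * (β i j * (1 - β i j)) * v j := fun i j => by
    rw [hbp i j]
    field_simp [(hu i).ne', (hv j).ne']
  have hds := hβ.1.1
  calc permanent p = (∏ i, u i) * (∏ j, v j) * (β.map fun b => b * (1 - b)).permanent := by
        rw [permanent_eq_matrix_permanent, ← Matrix.permanent_diagonal_mul_mul_diagonal]
        congr 1
        ext i j
        simp [hp]
    _ ≤ (∏ i, u i) * (∏ j, v j) * ∏ j, (1 - ∑ i, β i j ^ 2) := by
        gcongr
        · exact mul_nonneg (prod_nonneg fun i _ => (hu i).le) (prod_nonneg fun j _ => (hv j).le)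
        · exact (Matrix.permanent_le_prod_sum_col hds.mul_one_sub_nonneg).trans_eq
            (prod_congr rfl fun j _ => hds.sum_mul_one_sub j)
    _ = _ := by rw [exp_neg_FBP_mul_inv_prod_of_bp hβ hu hv hp]

theorem BP_upper_bound {n : ℕ} (p β : Matrix (Fin n) (Fin n) ℝ)
    (hp : ∀ i j, 0 ≤ p i j) (hβ : InInterior p β)
    (hBP : ∃ u v : Fin n → ℝ, (∀ i, 0 < u i) ∧ (∀ j, 0 < v j) ∧
      ∀ i j, β i j * (1 - β i j) = p i j / (u i * v j)) :
    permanent p ≤ Real.exp (-(FBP p β)) *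
      (∏ i, ∏ j, if 0 < p i j then 1 - β i j else 1)⁻¹ *
      ∏ j, (1 - ∑ i, (β i j) ^ 2) :=
  BP_upper_bound_general p β hβ hBP
end

section
/- Let p be an n×n real matrix with nonnegative entries and perm(p) > 0. Then for every γ ∈ [0,1], perm(p) ≤ Z_of^γ(p). -/
open scoped BigOperators

/-!
Draw a permutation `σ` with probability `μ σ = ∏ i, p i (σ i) / perm p` and let `β` be its
matrix of one-point marginals, a point of `𝓑_p`. For `γ ≥ 0` the term
`γ (1 - β) log (1 - β)` is nonpositive, and
`∑ β log (β / p) = ∑_σ μ σ log (∏ i, β i (σ i) / ∏ i, p i (σ i))`. Bounding each summand with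
`log x ≤ x - 1` gives at most `perm β - 1 - log perm p`, and `perm β ≤ ∏ i, ∑ j, β i j = 1`.
-/

open Finset Real Equiv

section

variable {n : ℕ}

lemma mul_log_div_le_sub {w v : ℝ} (hw : 0 < w) (hv : 0 < v) : w * log (v / w) ≤ v - w :=
  calc w * log (v / w) ≤ w * (v / w - 1) :=
        mul_le_mul_of_nonneg_left (log_le_sub_one_of_pos (div_pos hv hw)) hw.le
    _ = v - w := by field_simp

lemma sub_le_mul_log_div {b p : ℝ} (hp : 0 < p) (hb : 0 ≤ b) : b - p ≤ b * log (b / p) :=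
  calc b - p = p * (b / p - 1) := by field_simp
    _ ≤ p * (b / p * log (b / p)) := by gcongr; exact self_sub_one_le_mul_log (by positivity)
    _ = b * log (b / p) := by field_simp

lemma DoublyStochastic.le_one_s17 {β : Matrix (Fin n) (Fin n) ℝ} (hβ : DoublyStochastic β)
    (i j : Fin n) : β i j ≤ 1 :=
  (hβ.2.1 i).le.trans' <| single_le_sum (fun j _ => hβ.1 i j) (mem_univ j)

lemma antitone_Ff {p β : Matrix (Fin n) (Fin n) ℝ} (hβ : DoublyStochastic β) :
    Antitone fun γ => Ff γ p β := by
  intro γ γ' hγ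
  refine sum_le_sum fun i _ => sum_le_sum fun j _ => ?_
  split_ifs
  · have := mul_log_nonpos (sub_nonneg.2 (hβ.le_one_s17 i j)) (by linarith [hβ.1 i j])
    nlinarith
  · rfl

lemma bddBelow_Ff_image (γ : ℝ) (p : Matrix (Fin n) (Fin n) ℝ) :
    BddBelow ((fun β => Ff γ p β) '' {β | InPolytope p β}) := by
  refine ⟨∑ i, ∑ j : Fin n, -(|p i j| + |γ|), ?_⟩
  rintro _ ⟨β, ⟨hβ, -⟩, rfl⟩
  refine sum_le_sum fun i _ => sum_le_sum fun j _ => ?_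
  split_ifs with h
  · have hent := sub_le_mul_log_div h (hβ.1 i j)
    have hcompl : |(1 - β i j) * log (1 - β i j)| ≤ 1 := by
      have hb1 := sub_nonneg.2 (hβ.le_one_s17 i j)
      have := self_sub_one_le_mul_log hb1
      have := mul_log_nonpos hb1 (by linarith [hβ.1 i j])
      exact abs_le.2 ⟨by linarith [hβ.1 i j], by linarith⟩
    have hγ : -|γ| ≤ γ * ((1 - β i j) * log (1 - β i j)) := by
      refine le_trans ?_ (neg_abs_le _)
      rw [abs_mul, neg_le_neg_iff]
      exact mul_le_of_le_one_right (abs_nonneg γ) hcompl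
    linarith [le_abs_self (p i j), hβ.1 i j]
  · exact neg_nonpos.2 (by positivity)

def permWeight (p : Matrix (Fin n) (Fin n) ℝ) (σ : Perm (Fin n)) : ℝ := ∏ i, p i (σ i)

lemma sum_permWeight (p : Matrix (Fin n) (Fin n) ℝ) : ∑ σ, permWeight p σ = permanent p := rfl

lemma permWeight_nonneg {p : Matrix (Fin n) (Fin n) ℝ} (hp : ∀ i j, 0 ≤ p i j)
    (σ : Perm (Fin n)) : 0 ≤ permWeight p σ :=
  prod_nonneg fun i _ => hp i (σ i)

lemma permanent_le_prod_sum_row {β : Matrix (Fin n) (Fin n) ℝ} (hβ : ∀ i j, 0 ≤ β i j) :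
    permanent β ≤ ∏ i, ∑ j, β i j := by
  rw [Fintype.prod_sum fun i j => β i j, permanent]
  calc ∑ σ : Perm (Fin n), ∏ i, β i (σ i)
      = ∑ f ∈ univ.map ⟨_, DFunLike.coe_injective⟩, ∏ i, β i (f i) := by rw [sum_map]; rfl
    _ ≤ ∑ f : Fin n → Fin n, ∏ i, β i (f i) :=
      sum_le_univ_sum_of_nonneg fun f => prod_nonneg fun i _ => hβ i (f i)

/-- Entry `(i, j)` is the probability that `σ i = j` when the permutation `σ` is drawn with
probability proportional to `permWeight p σ`. -/
noncomputable def permMarginal (p : Matrix (Fin n) (Fin n) ℝ) : Matrix (Fin n) (Fin n) ℝ :=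
  Matrix.of fun i j => (∑ σ with σ i = j, permWeight p σ) / permanent p

section permMarginal

variable {p : Matrix (Fin n) (Fin n) ℝ}

lemma permMarginal_nonneg (hp : ∀ i j, 0 ≤ p i j) (hperm : 0 < permanent p) (i j : Fin n) :
    0 ≤ permMarginal p i j :=
  div_nonneg (sum_nonneg fun σ _ => permWeight_nonneg hp σ) hperm.le

lemma div_permanent_le_permMarginal (hp : ∀ i j, 0 ≤ p i j) (hperm : 0 < permanent p)
    (σ : Perm (Fin n)) (i : Fin n) : permWeight p σ / permanent p ≤ permMarginal p i (σ i) := by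
  refine div_le_div_of_nonneg_right ?_ hperm.le
  exact single_le_sum (fun τ _ => permWeight_nonneg hp τ) (by simp)

lemma sum_permMarginal_row (hperm : 0 < permanent p) (i : Fin n) :
    ∑ j, permMarginal p i j = 1 := by
  simp only [permMarginal, Matrix.of_apply, ← sum_div]
  rw [sum_fiberwise, sum_permWeight, div_self hperm.ne']

lemma sum_permMarginal_col (hperm : 0 < permanent p) (j : Fin n) :
    ∑ i, permMarginal p i j = 1 := by
  have hfiber (i : Fin n) : ∑ σ with σ i = j, permWeight p σ
      = ∑ σ with σ.symm j = i, permWeight p σ := by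
    simp only [Equiv.symm_apply_eq, eq_comm (a := j)]
  simp only [permMarginal, Matrix.of_apply, ← sum_div, hfiber]
  rw [sum_fiberwise, sum_permWeight, div_self hperm.ne']

lemma permMarginal_eq_zero (i j : Fin n) (hij : p i j = 0) : permMarginal p i j = 0 := by
  refine div_eq_zero_iff.2 (Or.inl (sum_eq_zero fun σ hσ => ?_))
  exact prod_eq_zero (mem_univ i) ((mem_filter.1 hσ).2 ▸ hij)

lemma inPolytope_permMarginal (hp : ∀ i j, 0 ≤ p i j) (hperm : 0 < permanent p) :
    InPolytope p (permMarginal p) :=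
  ⟨⟨permMarginal_nonneg hp hperm, sum_permMarginal_row hperm, sum_permMarginal_col hperm⟩,
    permMarginal_eq_zero⟩

lemma sum_permMarginal_mul (f : Fin n → Fin n → ℝ) :
    ∑ i, ∑ j, permMarginal p i j * f i j
      = (∑ σ, permWeight p σ * ∑ i, f i (σ i)) / permanent p := by
  simp only [permMarginal, Matrix.of_apply, div_mul_eq_mul_div, ← sum_div, sum_mul, mul_sum]
  rw [sum_comm (s := univ (α := Perm (Fin n)))]
  refine congrArg (· / _) (sum_congr rfl fun i _ => ?_)
  rw [← sum_fiberwise univ (fun σ : Perm (Fin n) => σ i)]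
  exact sum_congr rfl fun j _ => sum_congr rfl fun σ hσ => by rw [(mem_filter.1 hσ).2]

lemma permWeight_mul_sum_log_div_le (hp : ∀ i j, 0 ≤ p i j) (hperm : 0 < permanent p)
    (σ : Perm (Fin n)) :
    permWeight p σ * ∑ i, log (permMarginal p i (σ i) / p i (σ i))
      ≤ permanent p * permWeight (permMarginal p) σ - permWeight p σ
        - permWeight p σ * log (permanent p) := by
  have hν := permWeight_nonneg (permMarginal_nonneg hp hperm) σ
  rcases (permWeight_nonneg hp σ).eq_or_lt with hw | hw
  · rw [← hw]
    simpa using mul_nonneg hperm.le hν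
  have hpσ (i : Fin n) : p i (σ i) ≠ 0 := prod_ne_zero_iff.1 hw.ne' i (mem_univ i)
  have hβσ (i : Fin n) : 0 < permMarginal p i (σ i) :=
    (div_pos hw hperm).trans_le (div_permanent_le_permMarginal hp hperm σ i)
  have hνpos : 0 < permWeight (permMarginal p) σ := prod_pos fun i _ => hβσ i
  have hlog : log (permanent p * permWeight (permMarginal p) σ / permWeight p σ)
      = log (permanent p) + ∑ i, log (permMarginal p i (σ i) / p i (σ i)) := by
    rw [← log_prod fun i _ => div_ne_zero (hβσ i).ne' (hpσ i), prod_div_distrib, mul_div_assoc,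
      log_mul hperm.ne' (div_pos hνpos hw).ne']
    rfl
  have := mul_log_div_le_sub hw (mul_pos hperm hνpos)
  rw [hlog, mul_add] at this
  linarith

lemma Ff_zero_permMarginal_le (hp : ∀ i j, 0 ≤ p i j) (hperm : 0 < permanent p) :
    Ff 0 p (permMarginal p) ≤ -log (permanent p) := by
  have hFf : Ff 0 p (permMarginal p)
      = ∑ i, ∑ j, permMarginal p i j * log (permMarginal p i j / p i j) := by
    refine sum_congr rfl fun i _ => sum_congr rfl fun j _ => ?_
    split_ifs with h
    · ring
    · rw [permMarginal_eq_zero i j (le_antisymm (not_lt.1 h) (hp i j)), zero_mul]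
  have hperm_le_one : permanent (permMarginal p) ≤ 1 :=
    (permanent_le_prod_sum_row (permMarginal_nonneg hp hperm)).trans_eq
      (by simp [sum_permMarginal_row hperm])
  rw [hFf, sum_permMarginal_mul, div_le_iff₀ hperm]
  calc _ ≤ ∑ σ, (permanent p * permWeight (permMarginal p) σ - permWeight p σ
          - permWeight p σ * log (permanent p)) :=
        sum_le_sum fun σ _ => permWeight_mul_sum_log_div_le hp hperm σ
    _ = permanent p * permanent (permMarginal p) - permanent p
          - permanent p * log (permanent p) := by
        rw [sum_sub_distrib, sum_sub_distrib, ← mul_sum, ← sum_mul, sum_permWeight, sum_permWeight]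
    _ ≤ permanent p * 1 - permanent p - permanent p * log (permanent p) := by gcongr
    _ = -log (permanent p) * permanent p := by ring

end permMarginal

end

theorem Zof_upper_bound_nonneg_gamma {n : ℕ}
    (p : Matrix (Fin n) (Fin n) ℝ)
    (hp : ∀ i j, 0 ≤ p i j) (hperm : 0 < permanent p) :
    ∀ γ : ℝ, γ ∈ Set.Icc (0 : ℝ) 1 → permanent p ≤ Zof γ p := by
  rintro γ ⟨hγ, -⟩
  have hβ := inPolytope_permMarginal hp hperm
  have hmin : sInf ((fun β => Ff γ p β) '' {β | InPolytope p β}) ≤ -log (permanent p) :=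
    calc _ ≤ Ff γ p (permMarginal p) := csInf_le (bddBelow_Ff_image γ p) ⟨_, hβ, rfl⟩
      _ ≤ Ff 0 p (permMarginal p) := antitone_Ff hβ.1 hγ
      _ ≤ -log (permanent p) := Ff_zero_permMarginal_le hp hperm
  calc permanent p = exp (-(-log (permanent p))) := by rw [neg_neg, exp_log hperm]
    _ ≤ Zof γ p := exp_le_exp.2 (neg_le_neg hmin)
end
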